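/- Fix ε > 0 and let a > 0 be sufficiently small. If (u_n,v_n) is a sequence in X_ε with sup_n |J_ε(u_n,v_n)| < ∞ and |⟨J'_ε(u_n,v_n),(u_n,v_n)⟩| ≤ ε_n ‖(u_n,v_n)‖_ε for some sequence ε_n → 0, then sup_n ‖(u_n,v_n)‖_ε < ∞. -/

import Mathlib

/-!
Compare `p J_ε(u,v)` with `⟨J'_ε(u,v),(u,v)⟩`. Euler's identity for the `p`-homogeneous `Q`
gives the Ambrosetti–Rabinowitz-type bound
`p H ≤ u H_u + v H_v + (p - 2) A (u² + v²)`: along rays the cut-off term `r η'(r) (Q - A r²)`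
has a sign, because `η' ≤ 0` is supported in `a ≤ r ≤ 5a`, where `Q ≤ A r²` by the choice of `A`.
Homogeneity also gives `A = O(a^(p-2))`, so for small `a` the quadratic error is absorbed by
`V, W ≥ min (V x₀) (W x₀)`, leaving `(p - 2)/4 ‖(u,v)‖² ≤ p |J_ε| + ε_n ‖(u,v)‖`.
If one of the integrals is undefined (hence `0` in Lean), the same bound is immediate.
-/

open MeasureTheory Real Set Filter

noncomputable section

abbrev Euc (N : ℕ) := EuclideanSpace ℝ (Fin N)

/-- Partial derivative of a two-variable real function in the first variable. -/
def pdU (f : ℝ → ℝ → ℝ) (u v : ℝ) : ℝ := deriv (fun t => f t v) u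

/-- Partial derivative of a two-variable real function in the second variable. -/
def pdV (f : ℝ → ℝ → ℝ) (u v : ℝ) : ℝ := deriv (fun t => f u t) v

/-- Integrand of the Gagliardo seminorm. -/
def gagKer (N : ℕ) (s : ℝ) (u : Euc N → ℝ) (z : Euc N × Euc N) : ℝ :=
  (u z.1 - u z.2) ^ 2 / ‖z.1 - z.2‖ ^ ((N : ℝ) + 2 * s)

/-- Squared Gagliardo seminorm `[u]²`. -/
def gagSq (N : ℕ) (s : ℝ) (u : Euc N → ℝ) : ℝ := ∫ z, gagKer N s u z

/-- Membership in the fractional Sobolev space `H^s(ℝ^N)`. -/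
def MemHs (N : ℕ) (s : ℝ) (u : Euc N → ℝ) : Prop :=
  MemLp u 2 (volume : Measure (Euc N)) ∧ Integrable (gagKer N s u)

/-- The nonlinearity `Q` together with assumptions (Q1)-(Q6); `Q` is `C²` on the closed
first quadrant and extended by `0` outside of it.  Its partial derivatives are `pdU Q`,
`pdV Q`. -/
structure QSetup (p : ℝ) : Type where
  Q : ℝ → ℝ → ℝ
  smooth : ContDiffOn ℝ 2 (fun z : ℝ × ℝ => Q z.1 z.2) (Ici 0 ×ˢ Ici 0)
  ext_zero : ∀ u v : ℝ, u ≤ 0 ∨ v ≤ 0 → Q u v = 0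
  q1 : ∀ t : ℝ, 0 < t → ∀ u v : ℝ, 0 ≤ u → 0 ≤ v → Q (t * u) (t * v) = t ^ p * Q u v
  q2 : ∃ C : ℝ, 0 < C ∧ ∀ u v : ℝ, 0 ≤ u → 0 ≤ v →
        |pdU Q u v| + |pdV Q u v| ≤ C * (u ^ (p - 1) + v ^ (p - 1))
  q3 : pdU Q 0 1 = 0 ∧ pdV Q 1 0 = 0
  q4 : pdU Q 1 0 = 0 ∧ pdV Q 0 1 = 0
  q5 : ∀ u v : ℝ, 0 < u → 0 < v → 0 < Q u v
  q6 : ∀ u v : ℝ, 0 ≤ u → 0 ≤ v → 0 ≤ pdU Q u v ∧ 0 ≤ pdV Q u v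

/-- The potentials `V`, `W`, the set `Λ`, the point `x₀` and `ρ₀`, with (H1)-(H3). -/
structure PotSetup (N : ℕ) : Type where
  V : Euc N → ℝ
  W : Euc N → ℝ
  Λ : Set (Euc N)
  x₀ : Euc N
  ρ₀ : ℝ
  contV : Continuous V
  contW : Continuous W
  openΛ : IsOpen Λ
  bddΛ : Bornology.IsBounded Λ
  x₀mem : x₀ ∈ Λ
  ρ₀pos : 0 < ρ₀
  h1 : ∀ x ∈ frontier Λ, ρ₀ ≤ V x ∧ ρ₀ ≤ W x
  h2 : V x₀ < ρ₀ ∧ W x₀ < ρ₀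
  h3 : (∀ x, V x₀ ≤ V x) ∧ (∀ x, W x₀ ≤ W x) ∧ 0 < V x₀ ∧ 0 < W x₀

/-- `‖(u,v)‖²_ξ` for the autonomous problem with frozen potentials `V(ξ)`, `W(ξ)`. -/
def normSqXi {N : ℕ} (s : ℝ) (P : PotSetup N) (ξ : Euc N) (u v : Euc N → ℝ) : ℝ :=
  gagSq N s u + gagSq N s v + ∫ x, (P.V ξ * u x ^ 2 + P.W ξ * v x ^ 2)

/-- The autonomous energy functional `J_ξ`. -/
def Jxi {N : ℕ} (s : ℝ) {p : ℝ} (QS : QSetup p) (P : PotSetup N) (ξ : Euc N)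
    (u v : Euc N → ℝ) : ℝ :=
  (1 / 2) * normSqXi s P ξ u v - ∫ x, QS.Q (u x) (v x)

/-- The Nehari manifold `N_ξ` of the autonomous functional `J_ξ`. -/
def NehariXi {N : ℕ} (s : ℝ) {p : ℝ} (QS : QSetup p) (P : PotSetup N) (ξ : Euc N) :
    Set ((Euc N → ℝ) × (Euc N → ℝ)) :=
  {w | MemHs N s w.1 ∧ MemHs N s w.2 ∧ w ≠ (0, 0) ∧
    normSqXi s P ξ w.1 w.2 =
      ∫ x, (w.1 x * pdU QS.Q (w.1 x) (w.2 x) + w.2 x * pdV QS.Q (w.1 x) (w.2 x))}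

/-- `C(ξ) = inf_{(u,v) ∈ N_ξ} J_ξ(u,v)`. -/
def Cmin {N : ℕ} (s : ℝ) {p : ℝ} (QS : QSetup p) (P : PotSetup N) (ξ : Euc N) : ℝ :=
  sInf ((fun w : (Euc N → ℝ) × (Euc N → ℝ) => Jxi s QS P ξ w.1 w.2) '' NehariXi s QS P ξ)

/-- The cut-off function `η` used in the penalization, for a given `a > 0`. -/
structure EtaSetup (a cη : ℝ) : Type where
  η : ℝ → ℝ
  smooth : ContDiff ℝ 2 η
  anti : Antitone η
  mem01 : ∀ t, η t ∈ Icc (0 : ℝ) 1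
  eq_one : ∀ t, t ≤ a → η t = 1
  eq_zero : ∀ t, 5 * a ≤ t → η t = 0
  bd1 : ∀ t, |deriv η t| ≤ cη / a
  bd2 : ∀ t, |deriv (deriv η) t| ≤ cη / a ^ 2

/-- `A = max { Q(u,v)/(u²+v²) : a ≤ √(u²+v²) ≤ 5a }`. -/
def Aconst {p : ℝ} (QS : QSetup p) (a : ℝ) : ℝ :=
  sSup ((fun z : ℝ × ℝ => QS.Q z.1 z.2 / (z.1 ^ 2 + z.2 ^ 2)) ''
    {z : ℝ × ℝ | a ≤ Real.sqrt (z.1 ^ 2 + z.2 ^ 2) ∧ Real.sqrt (z.1 ^ 2 + z.2 ^ 2) ≤ 5 * a})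

/-- The penalized nonlinearity `Q̂`. -/
def Qhat {p : ℝ} (QS : QSetup p) (η : ℝ → ℝ) (A u v : ℝ) : ℝ :=
  η (Real.sqrt (u ^ 2 + v ^ 2)) * QS.Q u v +
    (1 - η (Real.sqrt (u ^ 2 + v ^ 2))) * (A * (u ^ 2 + v ^ 2))

/-- The penalized function `H(x,u,v) = χ_Λ(x) Q(u,v) + (1-χ_Λ(x)) Q̂(u,v)`. -/
def Hpen {N : ℕ} {p : ℝ} (QS : QSetup p) (η : ℝ → ℝ) (A : ℝ) (Λ : Set (Euc N))
    (x : Euc N) (u v : ℝ) : ℝ :=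
  Λ.indicator (fun _ => (1 : ℝ)) x * QS.Q u v +
    (1 - Λ.indicator (fun _ => (1 : ℝ)) x) * Qhat QS η A u v

/-- `H_u`. -/
def HpenU {N : ℕ} {p : ℝ} (QS : QSetup p) (η : ℝ → ℝ) (A : ℝ) (Λ : Set (Euc N))
    (x : Euc N) (u v : ℝ) : ℝ := pdU (Hpen QS η A Λ x) u v

/-- `H_v`. -/
def HpenV {N : ℕ} {p : ℝ} (QS : QSetup p) (η : ℝ → ℝ) (A : ℝ) (Λ : Set (Euc N))
    (x : Euc N) (u v : ℝ) : ℝ := pdV (Hpen QS η A Λ x) u v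

/-- `H_uu`. -/
def HpenUU {N : ℕ} {p : ℝ} (QS : QSetup p) (η : ℝ → ℝ) (A : ℝ) (Λ : Set (Euc N))
    (x : Euc N) (u v : ℝ) : ℝ := pdU (HpenU QS η A Λ x) u v

/-- `H_uv`. -/
def HpenUV {N : ℕ} {p : ℝ} (QS : QSetup p) (η : ℝ → ℝ) (A : ℝ) (Λ : Set (Euc N))
    (x : Euc N) (u v : ℝ) : ℝ := pdV (HpenU QS η A Λ x) u v

/-- `H_vv`. -/
def HpenVV {N : ℕ} {p : ℝ} (QS : QSetup p) (η : ℝ → ℝ) (A : ℝ) (Λ : Set (Euc N))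
    (x : Euc N) (u v : ℝ) : ℝ := pdV (HpenV QS η A Λ x) u v

/-- `‖(u,v)‖²_ε`. -/
def normSqE {N : ℕ} (s : ℝ) (P : PotSetup N) (ε : ℝ) (u v : Euc N → ℝ) : ℝ :=
  gagSq N s u + gagSq N s v + ∫ x, (P.V (ε • x) * u x ^ 2 + P.W (ε • x) * v x ^ 2)

/-- Membership in the space `X_ε`. -/
def MemXe {N : ℕ} (s : ℝ) (P : PotSetup N) (ε : ℝ) (u v : Euc N → ℝ) : Prop :=
  MemHs N s u ∧ MemHs N s v ∧
    Integrable (fun x => P.V (ε • x) * u x ^ 2 + P.W (ε • x) * v x ^ 2)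

/-- The penalized energy functional `J_ε`. -/
def Je {N : ℕ} (s : ℝ) {p : ℝ} (QS : QSetup p) (η : ℝ → ℝ) (A : ℝ) (P : PotSetup N)
    (ε : ℝ) (u v : Euc N → ℝ) : ℝ :=
  (1 / 2) * normSqE s P ε u v - ∫ x, Hpen QS η A P.Λ (ε • x) (u x) (v x)

/-- The pairing `⟨J'_ε(u,v),(φ,ψ)⟩`. -/
def pairJe {N : ℕ} (s : ℝ) {p : ℝ} (QS : QSetup p) (η : ℝ → ℝ) (A : ℝ) (P : PotSetup N)
    (ε : ℝ) (u v φ ψ : Euc N → ℝ) : ℝ :=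
  (∫ z : Euc N × Euc N, (u z.1 - u z.2) * (φ z.1 - φ z.2) / ‖z.1 - z.2‖ ^ ((N : ℝ) + 2 * s)) +
  (∫ z : Euc N × Euc N, (v z.1 - v z.2) * (ψ z.1 - ψ z.2) / ‖z.1 - z.2‖ ^ ((N : ℝ) + 2 * s)) +
  (∫ x, (P.V (ε • x) * u x * φ x + P.W (ε • x) * v x * ψ x)) -
  (∫ x, (φ x * HpenU QS η A P.Λ (ε • x) (u x) (v x) +
         ψ x * HpenV QS η A P.Λ (ε • x) (u x) (v x)))

/-- The Nehari manifold `N_ε` of the penalized functional `J_ε`. -/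
def NehariE {N : ℕ} (s : ℝ) {p : ℝ} (QS : QSetup p) (η : ℝ → ℝ) (A : ℝ) (P : PotSetup N)
    (ε : ℝ) : Set ((Euc N → ℝ) × (Euc N → ℝ)) :=
  {w | MemXe s P ε w.1 w.2 ∧ w ≠ (0, 0) ∧
    normSqE s P ε w.1 w.2 =
      ∫ x, (w.1 x * HpenU QS η A P.Λ (ε • x) (w.1 x) (w.2 x) +
            w.2 x * HpenV QS η A P.Λ (ε • x) (w.1 x) (w.2 x))}

end

open Topology

section PartialDerivatives

theorem mul_pdU_add_mul_pdV_eq {f : ℝ → ℝ → ℝ} {φ : ℝ → ℝ} {u v d : ℝ}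
    (hf : DifferentiableAt ℝ (fun z : ℝ × ℝ => f z.1 z.2) (u, v)) (hφ : HasDerivAt φ d 1)
    (hray : ∀ᶠ t in 𝓝 1, f (t * u) (t * v) = φ t) :
    u * pdU f u v + v * pdV f u v = d := by
  set D := fderiv ℝ (fun z : ℝ × ℝ => f z.1 z.2) (u, v)
  have hD := hf.hasFDerivAt
  have hU : HasDerivAt (fun t => f t v) (D (1, 0)) u :=
    hD.comp_hasDerivAt (l := fun z : ℝ × ℝ => f z.1 z.2) u
      ((hasDerivAt_id u).prodMk (hasDerivAt_const u v))
  have hV : HasDerivAt (fun t => f u t) (D (0, 1)) v :=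
    hD.comp_hasDerivAt (l := fun z : ℝ × ℝ => f z.1 z.2) v
      ((hasDerivAt_const v u).prodMk (hasDerivAt_id v))
  have hcurve : HasDerivAt (fun t : ℝ => (t * u, t * v)) (u, v) 1 := by
    simpa using ((hasDerivAt_id (1 : ℝ)).mul_const u).prodMk ((hasDerivAt_id (1 : ℝ)).mul_const v)
  have hray' : HasDerivAt (fun t => f (t * u) (t * v)) (D (u, v)) 1 :=
    hD.comp_hasDerivAt_of_eq 1 hcurve (by simp)
  have hsplit : D (u, v) = u * D (1, 0) + v * D (0, 1) := by
    rw [show ((u, v) : ℝ × ℝ) = u • ((1 : ℝ), (0 : ℝ)) + v • ((0 : ℝ), (1 : ℝ)) by simp,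
      map_add, D.map_smul, D.map_smul, smul_eq_mul, smul_eq_mul]
  rw [pdU, pdV, hU.deriv, hV.deriv, ← hsplit]
  exact hray'.unique (hφ.congr_of_eventuallyEq hray)

theorem mul_pdU_eq_of_eqOn_compl_quadrant {f g : ℝ → ℝ → ℝ}
    (hfg : ∀ u v, u ≤ 0 ∨ v ≤ 0 → f u v = g u v) {u v : ℝ} (h : u ≤ 0 ∨ v ≤ 0) :
    u * pdU f u v = u * pdU g u v := by
  rcases lt_trichotomy u 0 with hu | rfl | hu
  · have hev : (fun t => f t v) =ᶠ[𝓝 u] fun t => g t v := by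
      filter_upwards [Iio_mem_nhds hu] with t ht using hfg t v (Or.inl (le_of_lt ht))
    rw [pdU, pdU, hev.deriv_eq]
  · simp
  · have hv : v ≤ 0 := h.resolve_left hu.not_ge
    rw [pdU, pdU, funext fun t => hfg t v (Or.inr hv)]

theorem mul_pdV_eq_of_eqOn_compl_quadrant {f g : ℝ → ℝ → ℝ}
    (hfg : ∀ u v, u ≤ 0 ∨ v ≤ 0 → f u v = g u v) {u v : ℝ} (h : u ≤ 0 ∨ v ≤ 0) :
    v * pdV f u v = v * pdV g u v :=
  mul_pdU_eq_of_eqOn_compl_quadrant (fun v u h => hfg u v h.symm) h.symm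

end PartialDerivatives

namespace QSetup

variable {p : ℝ} (QS : QSetup p)

theorem Q_nonneg (u v : ℝ) : 0 ≤ QS.Q u v := by
  by_cases h : u ≤ 0 ∨ v ≤ 0
  · rw [QS.ext_zero u v h]
  · push Not at h
    exact (QS.q5 u v h.1 h.2).le

theorem Q_mul {t : ℝ} (ht : 0 < t) (u v : ℝ) : QS.Q (t * u) (t * v) = t ^ p * QS.Q u v := by
  by_cases h : u ≤ 0 ∨ v ≤ 0
  · have h' : t * u ≤ 0 ∨ t * v ≤ 0 :=
      h.imp (mul_nonpos_of_nonneg_of_nonpos ht.le) (mul_nonpos_of_nonneg_of_nonpos ht.le)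
    rw [QS.ext_zero u v h, QS.ext_zero _ _ h', mul_zero]
  · push Not at h
    exact QS.q1 t ht u v h.1.le h.2.le

theorem differentiableAt {u v : ℝ} (hu : 0 < u) (hv : 0 < v) :
    DifferentiableAt ℝ (fun z : ℝ × ℝ => QS.Q z.1 z.2) (u, v) :=
  (QS.smooth.contDiffAt (prod_mem_nhds (Ici_mem_nhds hu) (Ici_mem_nhds hv))).differentiableAt
    (by norm_num)

theorem exists_le_mul_rpow : ∃ M, 0 ≤ M ∧ ∀ u v, QS.Q u v ≤ M * √(u ^ 2 + v ^ 2) ^ p := by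
  have hcont : ContinuousOn (fun z : ℝ × ℝ => QS.Q z.1 z.2) (Icc 0 1 ×ˢ Icc 0 1) :=
    QS.smooth.continuousOn.mono (prod_mono Icc_subset_Ici_self Icc_subset_Ici_self)
  obtain ⟨z, -, hz⟩ := (isCompact_Icc.prod isCompact_Icc).exists_isMaxOn
    ⟨((0 : ℝ), (0 : ℝ)), by simp⟩ hcont
  refine ⟨QS.Q z.1 z.2, QS.Q_nonneg _ _, fun u v => ?_⟩
  by_cases h : u ≤ 0 ∨ v ≤ 0
  · rw [QS.ext_zero u v h]
    exact mul_nonneg (QS.Q_nonneg _ _) (by positivity)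
  push Not at h
  set r := √(u ^ 2 + v ^ 2)
  have hr : 0 < r := Real.sqrt_pos.mpr (by nlinarith)
  have hur : u ≤ r := Real.le_sqrt_of_sq_le (by nlinarith)
  have hvr : v ≤ r := Real.le_sqrt_of_sq_le (by nlinarith)
  have hmax : QS.Q (u / r) (v / r) ≤ QS.Q z.1 z.2 :=
    hz (show (u / r, v / r) ∈ Icc (0 : ℝ) 1 ×ˢ Icc (0 : ℝ) 1 from
      ⟨⟨div_nonneg h.1.le hr.le, (div_le_one hr).mpr hur⟩,
        ⟨div_nonneg h.2.le hr.le, (div_le_one hr).mpr hvr⟩⟩)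
  calc QS.Q u v = QS.Q (r * (u / r)) (r * (v / r)) := by
        rw [mul_div_cancel₀ _ hr.ne', mul_div_cancel₀ _ hr.ne']
    _ = r ^ p * QS.Q (u / r) (v / r) := QS.Q_mul hr _ _
    _ ≤ QS.Q z.1 z.2 * r ^ p := by
        rw [mul_comm]; exact mul_le_mul_of_nonneg_right hmax (by positivity)

end QSetup

section Penalization

variable {p : ℝ} (QS : QSetup p)

theorem hasDerivAt_penalized_ray {η : ℝ → ℝ} {r q A R : ℝ} (hη : DifferentiableAt ℝ η r) :
    HasDerivAt (fun t => η (t * r) * (t ^ p * q) + (1 - η (t * r)) * (A * (t ^ 2 * R)))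
      (r * deriv η r * (q - A * R) + p * (η r * q) + 2 * ((1 - η r) * (A * R))) 1 := by
  have hηr : HasDerivAt (fun t => η (t * r)) (deriv η r * r) 1 := by
    have h := hη.hasDerivAt.comp_of_eq 1 ((hasDerivAt_id (1 : ℝ)).mul_const r) (by simp)
    simpa only [Function.comp_def, id, one_mul] using h
  have hpow : HasDerivAt (fun t : ℝ => t ^ p) p 1 := by
    simpa using Real.hasDerivAt_rpow_const (x := 1) (p := p) (Or.inl one_ne_zero)
  have hsq : HasDerivAt (fun t : ℝ => t ^ 2) 2 1 := by simpa using hasDerivAt_pow 2 (1 : ℝ)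
  refine ((hηr.mul (hpow.mul_const q)).add
    ((hηr.const_sub 1).mul ((hsq.mul_const R).const_mul A))).congr_deriv ?_
  simp only [one_mul, Real.one_rpow, one_pow]
  ring

theorem Qhat_mul (η : ℝ → ℝ) (A : ℝ) {t : ℝ} (ht : 0 < t) (u v : ℝ) :
    Qhat QS η A (t * u) (t * v) = η (t * √(u ^ 2 + v ^ 2)) * (t ^ p * QS.Q u v) +
      (1 - η (t * √(u ^ 2 + v ^ 2))) * (A * (t ^ 2 * (u ^ 2 + v ^ 2))) := by
  have hR : (t * u) ^ 2 + (t * v) ^ 2 = t ^ 2 * (u ^ 2 + v ^ 2) := by ring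
  rw [Qhat, QS.Q_mul ht, hR, Real.sqrt_mul (sq_nonneg t), Real.sqrt_sq ht.le]

theorem Qhat_euler {η : ℝ → ℝ} (hη : Differentiable ℝ η) (A u v : ℝ) :
    u * pdU (Qhat QS η A) u v + v * pdV (Qhat QS η A) u v =
      √(u ^ 2 + v ^ 2) * deriv η √(u ^ 2 + v ^ 2) * (QS.Q u v - A * (u ^ 2 + v ^ 2)) +
        p * (η √(u ^ 2 + v ^ 2) * QS.Q u v) +
        2 * ((1 - η √(u ^ 2 + v ^ 2)) * (A * (u ^ 2 + v ^ 2))) := by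
  by_cases h0 : u = 0 ∧ v = 0
  · obtain ⟨rfl, rfl⟩ := h0
    simp [QS.ext_zero 0 0 (Or.inl le_rfl)]
  have hR : u ^ 2 + v ^ 2 ≠ 0 := by
    contrapose! h0
    exact ⟨by nlinarith, by nlinarith⟩
  have hray := hasDerivAt_penalized_ray (p := p) (q := QS.Q u v) (A := A) (R := u ^ 2 + v ^ 2)
    (hη √(u ^ 2 + v ^ 2))
  have hsqrt : DifferentiableAt ℝ (fun z : ℝ × ℝ => √(z.1 ^ 2 + z.2 ^ 2)) (u, v) := by
    fun_prop (disch := exact hR)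
  by_cases hq : 0 < u ∧ 0 < v
  · refine mul_pdU_add_mul_pdV_eq ?_ hray ?_
    · have hQ := QS.differentiableAt hq.1 hq.2
      unfold Qhat
      fun_prop
    · filter_upwards [Ioi_mem_nhds one_pos] with t ht using Qhat_mul QS η A ht u v
  -- Off the open quadrant `Qhat` need not be differentiable, but it agrees with its `Q`-free
  -- part `G` in every partial derivative whose coefficient is nonzero.
  · set G : ℝ → ℝ → ℝ := fun u v => (1 - η √(u ^ 2 + v ^ 2)) * (A * (u ^ 2 + v ^ 2))
    have hG : ∀ u v, u ≤ 0 ∨ v ≤ 0 → Qhat QS η A u v = G u v := fun u v h => by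
      simp [Qhat, G, QS.ext_zero u v h]
    have hq' : u ≤ 0 ∨ v ≤ 0 := by simpa only [not_and_or, not_lt] using hq
    rw [mul_pdU_eq_of_eqOn_compl_quadrant hG hq', mul_pdV_eq_of_eqOn_compl_quadrant hG hq']
    refine mul_pdU_add_mul_pdV_eq (by fun_prop) hray ?_
    filter_upwards [Ioi_mem_nhds one_pos] with t ht
    rw [← hG _ _ (hq'.imp (mul_nonpos_of_nonneg_of_nonpos ht.le)
      (mul_nonpos_of_nonneg_of_nonpos ht.le)), Qhat_mul QS η A ht,
      QS.ext_zero u v hq']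

end Penalization

theorem QSetup.euler {p : ℝ} (QS : QSetup p) (u v : ℝ) :
    u * pdU QS.Q u v + v * pdV QS.Q u v = p * QS.Q u v := by
  have hQ : Qhat QS (fun _ => 1) 0 = QS.Q := by
    funext u v
    simp [Qhat]
  simpa [hQ] using Qhat_euler QS (differentiable_const 1) 0 u v

namespace EtaSetup

variable {a cη : ℝ} (E : EtaSetup a cη)

theorem deriv_eq_zero_of_notMem {r : ℝ} (hr : r ∉ Icc a (5 * a)) : deriv E.η r = 0 := by
  rcases not_and_or.mp hr with hr | hr <;> push Not at hr
  · have hev : E.η =ᶠ[𝓝 r] fun _ => 1 := by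
      filter_upwards [Iio_mem_nhds hr] with t ht using E.eq_one t (le_of_lt ht)
    rw [hev.deriv_eq, deriv_const]
  · have hev : E.η =ᶠ[𝓝 r] fun _ => 0 := by
      filter_upwards [Ioi_mem_nhds hr] with t ht using E.eq_zero t (le_of_lt ht)
    rw [hev.deriv_eq, deriv_const]

theorem deriv_mul_nonneg {r c : ℝ} (hc : a ≤ r → r ≤ 5 * a → c ≤ 0) :
    0 ≤ deriv E.η r * c := by
  by_cases hr : r ∈ Icc a (5 * a)
  · exact mul_nonneg_of_nonpos_of_nonpos E.anti.deriv_nonpos (hc hr.1 hr.2)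
  · rw [E.deriv_eq_zero_of_notMem hr, zero_mul]

end EtaSetup

section AmbrosettiRabinowitz

variable {p : ℝ} (QS : QSetup p) {a cη : ℝ} (E : EtaSetup a cη) {A : ℝ}

theorem mul_Qhat_le (hp : 2 ≤ p) (hA : 0 ≤ A)
    (hQA : ∀ u v, a ≤ √(u ^ 2 + v ^ 2) → √(u ^ 2 + v ^ 2) ≤ 5 * a →
      QS.Q u v ≤ A * (u ^ 2 + v ^ 2)) (u v : ℝ) :
    p * Qhat QS E.η A u v ≤ u * pdU (Qhat QS E.η A) u v + v * pdV (Qhat QS E.η A) u v +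
      (p - 2) * A * (u ^ 2 + v ^ 2) := by
  rw [Qhat_euler QS (E.smooth.differentiable (by norm_num)), Qhat]
  set r := √(u ^ 2 + v ^ 2)
  have hsign : 0 ≤ r * (deriv E.η r * (QS.Q u v - A * (u ^ 2 + v ^ 2))) :=
    mul_nonneg (Real.sqrt_nonneg _)
      (E.deriv_mul_nonneg fun h1 h2 => sub_nonpos.mpr (hQA u v h1 h2))
  have hcut : 0 ≤ (p - 2) * E.η r * (A * (u ^ 2 + v ^ 2)) :=
    mul_nonneg (mul_nonneg (by linarith) (E.mem01 r).1) (by positivity)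
  linarith

theorem Hpen_of_mem {N : ℕ} (η : ℝ → ℝ) (A : ℝ) {Λ : Set (Euc N)} {x : Euc N} (hx : x ∈ Λ) :
    Hpen QS η A Λ x = QS.Q := by
  funext u v
  simp [Hpen, hx]

theorem Hpen_of_notMem {N : ℕ} (η : ℝ → ℝ) (A : ℝ) {Λ : Set (Euc N)} {x : Euc N}
    (hx : x ∉ Λ) : Hpen QS η A Λ x = Qhat QS η A := by
  funext u v
  simp [Hpen, hx]

theorem mul_Hpen_le {N : ℕ} (Λ : Set (Euc N)) (hp : 2 ≤ p) (hA : 0 ≤ A)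
    (hQA : ∀ u v, a ≤ √(u ^ 2 + v ^ 2) → √(u ^ 2 + v ^ 2) ≤ 5 * a →
      QS.Q u v ≤ A * (u ^ 2 + v ^ 2)) (x : Euc N) (u v : ℝ) :
    p * Hpen QS E.η A Λ x u v ≤ u * HpenU QS E.η A Λ x u v + v * HpenV QS E.η A Λ x u v +
      (p - 2) * A * (u ^ 2 + v ^ 2) := by
  rw [HpenU, HpenV]
  by_cases hx : x ∈ Λ
  · rw [Hpen_of_mem QS E.η A hx, QS.euler]
    have : 0 ≤ (p - 2) * A * (u ^ 2 + v ^ 2) := by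
      have := sub_nonneg.mpr hp
      positivity
    linarith
  · rw [Hpen_of_notMem QS E.η A hx]
    exact mul_Qhat_le QS E hp hA hQA u v

end AmbrosettiRabinowitz

section PenalizationConstant

variable {p : ℝ} (QS : QSetup p)

theorem Q_div_le_of_le_mul_rpow (hp : 2 ≤ p) {M a u v : ℝ} (hM : 0 ≤ M)
    (hQM : ∀ u v, QS.Q u v ≤ M * √(u ^ 2 + v ^ 2) ^ p) (ha : 0 < a)
    (h1 : a ≤ √(u ^ 2 + v ^ 2)) (h2 : √(u ^ 2 + v ^ 2) ≤ 5 * a) :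
    QS.Q u v / (u ^ 2 + v ^ 2) ≤ M * (5 * a) ^ (p - 2) := by
  set r := √(u ^ 2 + v ^ 2) with hr_def
  have hr : 0 < r := ha.trans_le h1
  have hR : u ^ 2 + v ^ 2 = r ^ (2 : ℝ) := by
    rw [Real.rpow_two, hr_def, Real.sq_sqrt (by positivity)]
  calc QS.Q u v / (u ^ 2 + v ^ 2) ≤ M * r ^ p / r ^ (2 : ℝ) := by
        rw [hR]; gcongr; exact hQM u v
    _ = M * r ^ (p - 2) := by rw [mul_div_assoc, Real.rpow_sub hr]
    _ ≤ M * (5 * a) ^ (p - 2) := by gcongr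

theorem Aconst_nonneg (a : ℝ) : 0 ≤ Aconst QS a := by
  refine Real.sSup_nonneg ?_
  rintro _ ⟨z, -, rfl⟩
  exact div_nonneg (QS.Q_nonneg _ _) (by positivity)

theorem Aconst_le (hp : 2 ≤ p) {M a : ℝ} (hM : 0 ≤ M)
    (hQM : ∀ u v, QS.Q u v ≤ M * √(u ^ 2 + v ^ 2) ^ p) (ha : 0 < a) :
    Aconst QS a ≤ M * (5 * a) ^ (p - 2) := by
  refine Real.sSup_le ?_ (by positivity)
  rintro _ ⟨z, ⟨h1, h2⟩, rfl⟩
  exact Q_div_le_of_le_mul_rpow QS hp hM hQM ha h1 h2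

theorem Q_le_Aconst_mul (hp : 2 ≤ p) {a u v : ℝ} (ha : 0 < a) (h1 : a ≤ √(u ^ 2 + v ^ 2))
    (h2 : √(u ^ 2 + v ^ 2) ≤ 5 * a) : QS.Q u v ≤ Aconst QS a * (u ^ 2 + v ^ 2) := by
  obtain ⟨M, hM, hQM⟩ := QS.exists_le_mul_rpow
  have hR : 0 < u ^ 2 + v ^ 2 := Real.sqrt_pos.mp (ha.trans_le h1)
  have hbdd : BddAbove ((fun z : ℝ × ℝ => QS.Q z.1 z.2 / (z.1 ^ 2 + z.2 ^ 2)) ''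
      {z : ℝ × ℝ | a ≤ √(z.1 ^ 2 + z.2 ^ 2) ∧ √(z.1 ^ 2 + z.2 ^ 2) ≤ 5 * a}) := by
    refine ⟨M * (5 * a) ^ (p - 2), ?_⟩
    rintro _ ⟨z, ⟨h1, h2⟩, rfl⟩
    exact Q_div_le_of_le_mul_rpow QS hp hM hQM ha h1 h2
  rw [← div_le_iff₀ hR]
  exact le_csSup hbdd ⟨(u, v), ⟨h1, h2⟩, rfl⟩

theorem exists_pos_forall_Aconst_le (hp : 2 < p) {δ : ℝ} (hδ : 0 < δ) :
    ∃ a₀ > 0, ∀ a, 0 < a → a < a₀ → Aconst QS a ≤ δ := by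
  obtain ⟨M, hM, hQM⟩ := QS.exists_le_mul_rpow
  have hlim : Tendsto (fun a : ℝ => M * (5 * a) ^ (p - 2)) (𝓝 0) (𝓝 0) := by
    have hc : Continuous (fun a : ℝ => M * (5 * a) ^ (p - 2)) := by
      have : 0 ≤ p - 2 := by linarith
      fun_prop
    simpa [Real.zero_rpow (by linarith : p - 2 ≠ 0)] using hc.tendsto 0
  obtain ⟨a₀, ha₀, h⟩ := Metric.eventually_nhds_iff.mp (hlim.eventually (ge_mem_nhds hδ))
  refine ⟨a₀, ha₀, fun a ha haa₀ => (Aconst_le QS hp.le hM hQM ha).trans (h ?_)⟩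
  rwa [Real.dist_eq, sub_zero, abs_of_pos ha]

end PenalizationConstant

section Functional

variable {N : ℕ} {s p : ℝ} (QS : QSetup p) (η : ℝ → ℝ) (A : ℝ) (P : PotSetup N) (ε : ℝ)
  {u v : Euc N → ℝ}

theorem gagSq_nonneg (N : ℕ) (s : ℝ) (u : Euc N → ℝ) : 0 ≤ gagSq N s u :=
  integral_nonneg fun _ => div_nonneg (sq_nonneg _) (by positivity)

theorem PotSetup.min_pos : 0 < min (P.V P.x₀) (P.W P.x₀) :=
  lt_min P.h3.2.2.1 P.h3.2.2.2

theorem PotSetup.min_mul_sq_le (x : Euc N) (y z : ℝ) :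
    min (P.V P.x₀) (P.W P.x₀) * (y ^ 2 + z ^ 2) ≤ P.V x * y ^ 2 + P.W x * z ^ 2 := by
  have hV := (min_le_left (P.V P.x₀) (P.W P.x₀)).trans (P.h3.1 x)
  have hW := (min_le_right (P.V P.x₀) (P.W P.x₀)).trans (P.h3.2.1 x)
  nlinarith [mul_le_mul_of_nonneg_right hV (sq_nonneg y),
    mul_le_mul_of_nonneg_right hW (sq_nonneg z)]

theorem normSqE_nonneg : 0 ≤ normSqE s P ε u v := by
  have hpot : 0 ≤ ∫ x, (P.V (ε • x) * u x ^ 2 + P.W (ε • x) * v x ^ 2) :=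
    integral_nonneg fun x => (mul_nonneg P.min_pos.le (by positivity)).trans
      (P.min_mul_sq_le _ _ _)
  unfold normSqE
  linarith [gagSq_nonneg N s u, gagSq_nonneg N s v]

theorem min_mul_integral_le_normSqE (hmem : MemXe s P ε u v) :
    min (P.V P.x₀) (P.W P.x₀) * ∫ x, (u x ^ 2 + v x ^ 2) ≤ normSqE s P ε u v := by
  obtain ⟨⟨hu, -⟩, ⟨hv, -⟩, hpot⟩ := hmem
  have hsq : Integrable fun x => u x ^ 2 + v x ^ 2 := hu.integrable_sq.add hv.integrable_sq
  rw [← integral_const_mul]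
  unfold normSqE
  linarith [gagSq_nonneg N s u, gagSq_nonneg N s v,
    integral_mono (hsq.const_mul _) hpot fun x => P.min_mul_sq_le (ε • x) (u x) (v x)]

theorem pairJe_self :
    pairJe s QS η A P ε u v u v = normSqE s P ε u v -
      ∫ x, (u x * HpenU QS η A P.Λ (ε • x) (u x) (v x) +
        v x * HpenV QS η A P.Λ (ε • x) (u x) (v x)) := by
  simp only [pairJe, normSqE, gagSq, gagKer, ← sq]
  congr 3
  funext x
  ring

theorem min_mul_normSqE_le (hp : 2 < p) (hA : A ≤ min (P.V P.x₀) (P.W P.x₀) / 4)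
    (hH : ∀ x y z, p * Hpen QS η A P.Λ x y z ≤
      y * HpenU QS η A P.Λ x y z + z * HpenV QS η A P.Λ x y z + (p - 2) * A * (y ^ 2 + z ^ 2))
    (hmem : MemXe s P ε u v) :
    min 1 ((p - 2) / 4) * normSqE s P ε u v ≤
      p * |Je s QS η A P ε u v| + |pairJe s QS η A P ε u v u v| := by
  set T := normSqE s P ε u v
  set D := fun x => u x * HpenU QS η A P.Λ (ε • x) (u x) (v x) +
    v x * HpenV QS η A P.Λ (ε • x) (u x) (v x)
  set H := fun x => Hpen QS η A P.Λ (ε • x) (u x) (v x)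
  have hT : 0 ≤ T := normSqE_nonneg P ε
  have hpair : pairJe s QS η A P ε u v u v = T - ∫ x, D x := pairJe_self QS η A P ε
  have hJ : Je s QS η A P ε u v = 1 / 2 * T - ∫ x, H x := rfl
  have hκ : min 1 ((p - 2) / 4) * T ≤ T := mul_le_of_le_one_left hT (min_le_left _ _)
  have hJabs : p * Je s QS η A P ε u v ≤ p * |Je s QS η A P ε u v| :=
    mul_le_mul_of_nonneg_left (le_abs_self _) (by linarith)
  by_cases hD : Integrable D
  swap
  · rw [hpair, integral_undef hD, sub_zero, abs_of_nonneg hT]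
    linarith [mul_nonneg (by linarith : (0 : ℝ) ≤ p) (abs_nonneg (Je s QS η A P ε u v))]
  by_cases hHi : Integrable H
  swap
  · rw [hJ, integral_undef hHi, sub_zero] at hJabs ⊢
    nlinarith [abs_nonneg (pairJe s QS η A P ε u v u v)]
  have hsq : Integrable fun x => u x ^ 2 + v x ^ 2 :=
    hmem.1.1.integrable_sq.add hmem.2.1.1.integrable_sq
  have hAR : p * ∫ x, H x ≤ (∫ x, D x) + (p - 2) * A * ∫ x, (u x ^ 2 + v x ^ 2) := by
    rw [← integral_const_mul, ← integral_const_mul, ← integral_add hD (hsq.const_mul _)]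
    exact integral_mono (hHi.const_mul p) (hD.add (hsq.const_mul _))
      fun x => hH (ε • x) (u x) (v x)
  have hsmall : (p - 2) * A * ∫ x, (u x ^ 2 + v x ^ 2) ≤ (p - 2) / 4 * T := by
    have hI := min_mul_integral_le_normSqE P ε hmem
    have hI0 : 0 ≤ ∫ x, (u x ^ 2 + v x ^ 2) := integral_nonneg fun x => by positivity
    nlinarith [mul_le_mul_of_nonneg_right hA hI0]
  calc min 1 ((p - 2) / 4) * T ≤ (p - 2) / 4 * T := by gcongr; exact min_le_right _ _
    _ ≤ p * Je s QS η A P ε u v - pairJe s QS η A P ε u v u v := by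
        rw [hJ, hpair]; linarith
    _ ≤ _ := by linarith [neg_abs_le (pairJe s QS η A P ε u v u v)]

end Functional

theorem le_max_one_of_mul_sq_le {κ b c x : ℝ} (hκ : 0 < κ) (hx : 0 ≤ x)
    (h : κ * x ^ 2 ≤ b + c * x) : x ≤ max 1 ((|b| + |c|) / κ) := by
  rcases le_or_gt x 1 with hx1 | hx1
  · exact le_max_of_le_left hx1
  refine le_max_of_le_right ((le_div_iff₀ hκ).mpr ?_)
  nlinarith [le_abs_self b, le_abs_self c, abs_nonneg b]

theorem stmt7_general {N : ℕ} (s p : ℝ)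
    (hp : 2 < p ∧ p < 2 * (N : ℝ) / ((N : ℝ) - 2 * s))
    (QS : QSetup p) (P : PotSetup N) (cη : ℝ) :
    ∀ ε : ℝ, 0 < ε → ∃ a₀ > 0, ∀ a : ℝ, 0 < a → a < a₀ → ∀ E : EtaSetup a cη,
      ∀ u v : ℕ → Euc N → ℝ, (∀ n, MemXe s P ε (u n) (v n)) →
      (∃ Cb : ℝ, ∀ n, |Je s QS E.η (Aconst QS a) P ε (u n) (v n)| ≤ Cb) →
      ∀ εs : ℕ → ℝ, Tendsto εs atTop (nhds (0 : ℝ)) →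
      (∀ n, |pairJe s QS E.η (Aconst QS a) P ε (u n) (v n) (u n) (v n)| ≤
        εs n * Real.sqrt (normSqE s P ε (u n) (v n))) →
      ∃ Cb' : ℝ, ∀ n, Real.sqrt (normSqE s P ε (u n) (v n)) ≤ Cb' := by
  intro ε _
  obtain ⟨a₀, ha₀, hA⟩ := exists_pos_forall_Aconst_le QS hp.1 (div_pos P.min_pos four_pos)
  refine ⟨a₀, ha₀, fun a ha haa₀ E u v hmem ⟨Cb, hCb⟩ εs hεs hpair => ?_⟩
  obtain ⟨S, hS⟩ := hεs.bddAbove_range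
  have hH := mul_Hpen_le QS E P.Λ hp.1.le (Aconst_nonneg QS a)
    fun _ _ => Q_le_Aconst_mul QS hp.1.le ha
  refine ⟨max 1 ((|p * Cb| + |S|) / min 1 ((p - 2) / 4)), fun n => ?_⟩
  refine le_max_one_of_mul_sq_le (lt_min one_pos (by linarith [hp.1])) (Real.sqrt_nonneg _) ?_
  rw [Real.sq_sqrt (normSqE_nonneg P ε)]
  calc _ ≤ p * |Je s QS E.η (Aconst QS a) P ε (u n) (v n)| +
        |pairJe s QS E.η (Aconst QS a) P ε (u n) (v n) (u n) (v n)| :=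
        min_mul_normSqE_le QS E.η _ P ε hp.1 (hA a ha haa₀) hH (hmem n)
    _ ≤ p * Cb + S * √(normSqE s P ε (u n) (v n)) :=
        add_le_add (mul_le_mul_of_nonneg_left (hCb n) (by linarith [hp.1]))
          ((hpair n).trans (mul_le_mul_of_nonneg_right (hS ⟨n, rfl⟩) (Real.sqrt_nonneg _)))

/-- boundedness of Palais-Smale–type sequences for `J_ε`. -/
theorem stmt7 {N : ℕ} (s p : ℝ) (hs : 0 < s ∧ s < 1) (hN : 2 * s < (N : ℝ))
    (hp : 2 < p ∧ p < 2 * (N : ℝ) / ((N : ℝ) - 2 * s))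
    (QS : QSetup p) (P : PotSetup N) (cη : ℝ) (hcη : 0 < cη) :
    ∀ ε : ℝ, 0 < ε → ∃ a₀ > 0, ∀ a : ℝ, 0 < a → a < a₀ → ∀ E : EtaSetup a cη,
      ∀ u v : ℕ → Euc N → ℝ, (∀ n, MemXe s P ε (u n) (v n)) →
      (∃ Cb : ℝ, ∀ n, |Je s QS E.η (Aconst QS a) P ε (u n) (v n)| ≤ Cb) →
      ∀ εs : ℕ → ℝ, Tendsto εs atTop (nhds (0 : ℝ)) →
      (∀ n, |pairJe s QS E.η (Aconst QS a) P ε (u n) (v n) (u n) (v n)| ≤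
        εs n * Real.sqrt (normSqE s P ε (u n) (v n))) →
      ∃ Cb' : ℝ, ∀ n, Real.sqrt (normSqE s P ε (u n) (v n)) ≤ Cb' :=
  stmt7_general s p hp QS P cη
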